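/- The map x ↦ A[xx]A is a bijection from the elements of C onto the maximal indecomposable two-sided ideals of its incidence algebra A, and under this bijection x ≼ y if and only if (A[xx]A)·(A[yy]A) ≠ 0. -/

import Mathlib

open Classical in
/-- The generator `[xy]` of the incidence algebra over `ℂ`:
the "matrix unit" supported at `(x, y)` (zero unless `x ≤ y`). -/
noncomputable def gen {C : Type*} [PartialOrder C] (x y : C) :
    IncidenceAlgebra ℂ C :=
  ⟨fun a b => if a = x ∧ b = y ∧ x ≤ y then 1 else 0, by
    intro a b hab
    try simp only
    rw [if_neg]
    rintro ⟨rfl, rfl, hxy⟩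
    exact hab hxy⟩

/-- The product of two two-sided ideals: the two-sided ideal generated by pairwise products. -/
noncomputable def idealProd {R : Type*} [NonUnitalNonAssocRing R] (I J : TwoSidedIdeal R) :
    TwoSidedIdeal R :=
  TwoSidedIdeal.span {z | ∃ a ∈ I, ∃ b ∈ J, z = a * b}

/-- A two-sided ideal is indecomposable if it is nonzero and is not the sum (join)
of two ideals each distinct from itself. -/
def IsIndecomposable {R : Type*} [NonUnitalNonAssocRing R] (I : TwoSidedIdeal R) : Prop :=
  I ≠ ⊥ ∧ ∀ I₁ I₂ : TwoSidedIdeal R, I = I₁ ⊔ I₂ → I₁ = I ∨ I₂ = I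

/-- A maximal indecomposable ideal: indecomposable and properly contained in no
other indecomposable ideal. -/
def IsMaximalIndecomposable {R : Type*} [NonUnitalNonAssocRing R]
    (I : TwoSidedIdeal R) : Prop :=
  IsIndecomposable I ∧ ∀ J : TwoSidedIdeal R, IsIndecomposable J → I ≤ J → I = J

open Finset TwoSidedIdeal


section
variable {C : Type*} [Fintype C] [PartialOrder C] [DecidableEq C] [LocallyFiniteOrder C]

omit [Fintype C] [LocallyFiniteOrder C] in
open Classical in
lemma gen_apply (x y a b : C) :
    gen x y a b = if a = x ∧ b = y ∧ x ≤ y then 1 else 0 := by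
  simp only [gen, IncidenceAlgebra.coe_mk]
  congr!

omit [Fintype C] [LocallyFiniteOrder C] in
lemma gen_apply_self {x y : C} (h : x ≤ y) : gen x y x y = 1 := by
  classical simp [gen_apply, h]

omit [Fintype C] [LocallyFiniteOrder C] in
lemma gen_eq_zero {x y : C} (h : ¬ x ≤ y) : gen x y = 0 := by
  ext a b _
  classical simp only [gen_apply, IncidenceAlgebra.zero_apply, ite_eq_right_iff]
  rintro ⟨rfl, rfl, hxy⟩; exact absurd hxy h

omit [Fintype C] [LocallyFiniteOrder C] in
lemma gen_ne_zero {x y : C} (h : x ≤ y) : gen x y ≠ 0 := fun hc => by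
  have := gen_apply_self h
  rw [hc] at this
  simp [IncidenceAlgebra.zero_apply] at this

lemma smul_apply' (c : ℂ) (f : IncidenceAlgebra ℂ C) (a b : C) :
    (c • f) a b = c * f a b := rfl

omit [Fintype C] in
lemma gen_mul_gen {a x b : C} (hax : a ≤ x) (hxb : x ≤ b) :
    gen a x * gen x b = gen a b := by
  ext p q hpq
  classical
  simp only [IncidenceAlgebra.mul_apply, gen_apply, mul_ite, mul_one, mul_zero, ite_mul,
    one_mul, zero_mul]
  by_cases hp : p = a
  · by_cases hq : q = b
    · subst hp; subst hq
      simp [hax, hxb, hax.trans hxb, Finset.mem_Icc, and_comm]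
    · simp [hq]
  · simp [hp]

set_option linter.unusedSectionVars false

/-- Evaluation at a pair, as an additive monoid hom. -/
def evalAM (a b : C) : IncidenceAlgebra ℂ C →+ ℂ where
  toFun f := f a b
  map_zero' := rfl
  map_add' _ _ := rfl

lemma gen_extract (f : IncidenceAlgebra ℂ C) (a b : C) :
    gen a a * f * gen b b = f a b • gen a b := by
  ext p q hpq
  classical
  simp only [IncidenceAlgebra.mul_apply, gen_apply, smul_apply', mul_ite, mul_one, mul_zero,
    ite_mul, one_mul, zero_mul, smul_eq_mul]
  by_cases hp : p = a
  · by_cases hq : q = b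
    · subst hp; subst hq
      by_cases hab : p ≤ q
      · simp [hab, Finset.sum_ite_eq, Finset.mem_Icc, hpq]
      · exact absurd hpq hab
    · simp [hq, Finset.sum_ite_eq, Finset.mem_Icc]
  · simp [hp]

lemma sum_decomp (f : IncidenceAlgebra ℂ C) :
    f = ∑ a : C, ∑ b : C, f a b • gen a b := by
  ext p q hpq
  classical
  have : ∀ (g : IncidenceAlgebra ℂ C) (s : Finset C) (F : C → IncidenceAlgebra ℂ C),
      (∑ a ∈ s, F a) p q = ∑ a ∈ s, (F a) p q := by
    intro g s F
    exact map_sum (evalAM p q) F s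
  rw [this f, Finset.sum_congr rfl (fun a _ => this f _ _)]
  simp only [smul_apply', gen_apply, mul_ite, mul_one, mul_zero]
  rw [Finset.sum_eq_single_of_mem p (Finset.mem_univ p)]
  · rw [Finset.sum_eq_single_of_mem q (Finset.mem_univ q)]
    · simp [hpq]
    · intro b _ hb; exact if_neg (by tauto)
  · intro a _ ha; exact Finset.sum_eq_zero fun b _ => if_neg (by tauto)

lemma span_le' {R : Type*} [NonUnitalNonAssocRing R] {s : Set R} {I : TwoSidedIdeal R}
    (h : s ⊆ I) : TwoSidedIdeal.span s ≤ I :=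
  fun _ hx => mem_span_iff.mp hx I h

lemma smul_one_mul' (c : ℂ) (f : IncidenceAlgebra ℂ C) :
    (c • (1 : IncidenceAlgebra ℂ C)) * f = c • f := by
  ext p q hpq
  classical
  simp only [IncidenceAlgebra.mul_apply, smul_apply', IncidenceAlgebra.one_apply, mul_ite, mul_one,
    mul_zero, ite_mul, zero_mul, smul_eq_mul]
  rw [Finset.sum_eq_single_of_mem p (by simp [hpq])]
  · simp
  · intro b _ hb; simp [Ne.symm hb]

lemma smul_mem' {I : TwoSidedIdeal (IncidenceAlgebra ℂ C)} (c : ℂ)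
    {f : IncidenceAlgebra ℂ C} (hf : f ∈ I) : c • f ∈ I := by
  rw [← smul_one_mul']
  exact I.mul_mem_left _ _ hf

lemma gen_mem_of_mem {I : TwoSidedIdeal (IncidenceAlgebra ℂ C)} {f : IncidenceAlgebra ℂ C}
    (hf : f ∈ I) {a b : C} (hab : f a b ≠ 0) : gen a b ∈ I := by
  have h1 : f a b • gen a b ∈ I := by
    rw [← gen_extract]
    exact I.mul_mem_right _ _ (I.mul_mem_left _ _ hf)
  have h2 := smul_mem' (f a b)⁻¹ h1
  rwa [smul_smul, inv_mul_cancel₀ hab, one_smul] at h2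

/-- The ideal of functions supported on `{(a,b) | a ≤ u ∧ v ≤ b}`. -/
def suppIdeal (u v : C) : TwoSidedIdeal (IncidenceAlgebra ℂ C) :=
  TwoSidedIdeal.mk' {f | ∀ a b, f a b ≠ 0 → a ≤ u ∧ v ≤ b}
    (fun a b h => absurd rfl h)
    (fun {f g} hf hg a b h => by
      by_cases h1 : f a b ≠ 0
      · exact hf a b h1
      · push_neg at h1
        refine hg a b ?_
        intro h2
        exact h (by rw [IncidenceAlgebra.add_apply, h1, h2, add_zero]))
    (fun {f} hf a b h => hf a b (by
      intro h2
      exact h (by rw [IncidenceAlgebra.neg_apply, h2, neg_zero])))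
    (fun {g f} hf a b h => by
      rw [IncidenceAlgebra.mul_apply] at h
      obtain ⟨c, hc, hne⟩ := Finset.exists_ne_zero_of_sum_ne_zero h
      rw [Finset.mem_Icc] at hc
      have := hf c b (right_ne_zero_of_mul hne)
      exact ⟨hc.1.trans this.1, this.2⟩)
    (fun {f g} hf a b h => by
      rw [IncidenceAlgebra.mul_apply] at h
      obtain ⟨c, hc, hne⟩ := Finset.exists_ne_zero_of_sum_ne_zero h
      rw [Finset.mem_Icc] at hc
      have := hf a c (left_ne_zero_of_mul hne)
      exact ⟨this.1, this.2.trans hc.2⟩)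

lemma mem_suppIdeal_iff {u v : C} {f : IncidenceAlgebra ℂ C} :
    f ∈ suppIdeal u v ↔ ∀ a b, f a b ≠ 0 → a ≤ u ∧ v ≤ b :=
  TwoSidedIdeal.mem_mk' _ _ _ _ _ _ f

lemma gen_mem_suppIdeal (u v : C) : gen u v ∈ suppIdeal u v := by
  rw [mem_suppIdeal_iff]
  intro a b h
  classical
  rw [gen_apply] at h
  by_cases hc : a = u ∧ b = v ∧ u ≤ v
  · obtain ⟨rfl, rfl, _⟩ := hc; exact ⟨le_refl _, le_refl _⟩
  · rw [if_neg hc] at h; exact absurd rfl h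

lemma span_gen_le_suppIdeal (u v : C) :
    TwoSidedIdeal.span {gen u v} ≤ suppIdeal u v :=
  span_le' (by simpa using gen_mem_suppIdeal u v)

lemma indec_sup {R : Type*} [NonUnitalNonAssocRing R] {J : TwoSidedIdeal R}
    (hJ : IsIndecomposable J) {ι : Type*} [DecidableEq ι] (s : Finset ι)
    (g : ι → TwoSidedIdeal R) (h : J = s.sup g) : ∃ i ∈ s, J = g i := by
  induction s using Finset.induction_on with
  | empty =>
    rw [Finset.sup_empty] at h
    exact absurd h hJ.1
  | insert a s hni ih =>
    rw [Finset.sup_insert] at h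
    rcases hJ.2 _ _ h with h1 | h1
    · exact ⟨a, Finset.mem_insert_self _ _, h1.symm⟩
    · obtain ⟨i, hi, hh⟩ := ih h1.symm
      exact ⟨i, Finset.mem_insert_of_mem hi, hh⟩

open Classical in
lemma indec_principal {J : TwoSidedIdeal (IncidenceAlgebra ℂ C)}
    (hJ : IsIndecomposable J) : ∃ a b : C, J = TwoSidedIdeal.span {gen a b} := by
  classical
  set S : Finset (C × C) := Finset.univ.filter (fun p => gen p.1 p.2 ∈ J) with hS
  have hsup : J = S.sup (fun p => TwoSidedIdeal.span {gen p.1 p.2}) := by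
    apply le_antisymm
    · intro f hf
      rw [sum_decomp f]
      refine sum_mem ?_
      intro a _
      refine sum_mem ?_
      intro b _
      by_cases h0 : f a b = 0
      · rw [h0, zero_smul]; exact TwoSidedIdeal.zero_mem _
      · have hg : gen a b ∈ J := gen_mem_of_mem hf h0
        have hmem : (a, b) ∈ S := by simp [hS, hg]
        exact Finset.le_sup (f := fun p => TwoSidedIdeal.span {gen p.1 p.2}) hmem
          (smul_mem' _ (subset_span (Set.mem_singleton _)))
    · refine Finset.sup_le ?_
      intro p hp
      rw [hS, Finset.mem_filter] at hp
      exact span_le' (by simpa using hp.2)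
  obtain ⟨p, _, hp⟩ := indec_sup hJ S _ hsup
  exact ⟨p.1, p.2, hp⟩

lemma span_gen_ne_bot (x : C) : TwoSidedIdeal.span {gen x x} ≠ ⊥ := by
  intro h
  have hmem : gen x x ∈ TwoSidedIdeal.span {gen x x} := subset_span (Set.mem_singleton _)
  rw [h, TwoSidedIdeal.mem_bot] at hmem
  exact gen_ne_zero le_rfl hmem

lemma span_gen_indec (x : C) : IsIndecomposable (TwoSidedIdeal.span {gen x x}) := by
  refine ⟨span_gen_ne_bot x, ?_⟩
  intro I₁ I₂ hs
  have hx : gen x x ∈ I₁ ⊔ I₂ := by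
    rw [← hs]; exact subset_span (Set.mem_singleton _)
  rw [TwoSidedIdeal.mem_sup] at hx
  obtain ⟨y, hy, z, hz, hyz⟩ := hx
  have h1 : y x x + z x x = 1 := by
    rw [← gen_apply_self (le_refl x), ← hyz]; rfl
  by_cases hy0 : y x x = 0
  · right
    have hz0 : z x x ≠ 0 := by
      intro h; rw [hy0, h, add_zero] at h1; exact zero_ne_one h1
    refine le_antisymm (hs ▸ le_sup_right) (span_le' ?_)
    simpa using gen_mem_of_mem hz hz0
  · left
    refine le_antisymm (hs ▸ le_sup_left) (span_le' ?_)
    simpa using gen_mem_of_mem hy hy0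

lemma le_of_span_gen_ne_bot {a b : C} (h : TwoSidedIdeal.span {gen a b} ≠ ⊥) : a ≤ b := by
  by_contra hab
  refine h (le_antisymm ?_ bot_le)
  refine span_le' ?_
  rw [gen_eq_zero hab]
  intro z hz
  rw [Set.mem_singleton_iff] at hz
  rw [SetLike.mem_coe, TwoSidedIdeal.mem_bot]
  exact hz

lemma span_gen_max (x : C) : IsMaximalIndecomposable (TwoSidedIdeal.span {gen x x}) := by
  refine ⟨span_gen_indec x, ?_⟩
  intro J hJ hle
  obtain ⟨a, b, rfl⟩ := indec_principal hJ
  have hab : a ≤ b := le_of_span_gen_ne_bot hJ.1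
  have hx : gen x x ∈ suppIdeal a b :=
    span_gen_le_suppIdeal a b (hle (subset_span (Set.mem_singleton _)))
  rw [mem_suppIdeal_iff] at hx
  obtain ⟨hxa, hbx⟩ := hx x x (by rw [gen_apply_self le_rfl]; exact one_ne_zero)
  obtain rfl : a = x := le_antisymm (hab.trans hbx) hxa
  obtain rfl : b = a := le_antisymm hbx (hxa.trans hab)
  rfl

lemma part3 {I : TwoSidedIdeal (IncidenceAlgebra ℂ C)} (hI : IsMaximalIndecomposable I) :
    ∃ x : C, I = TwoSidedIdeal.span {gen x x} := by
  obtain ⟨a, b, rfl⟩ := indec_principal hI.1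
  have hab : a ≤ b := le_of_span_gen_ne_bot hI.1.1
  refine ⟨a, hI.2 _ (span_gen_indec a) (span_le' ?_)⟩
  intro z hz
  rw [Set.mem_singleton_iff] at hz
  subst hz
  rw [SetLike.mem_coe, ← gen_mul_gen (le_refl a) hab]
  exact TwoSidedIdeal.mul_mem_right _ _ _ (subset_span (Set.mem_singleton _))

lemma part1 : Function.Injective (fun x : C => TwoSidedIdeal.span {gen x x}) := by
  intro x y hxy
  simp only at hxy
  have hx : gen x x ∈ suppIdeal y y :=
    span_gen_le_suppIdeal y y (hxy ▸ subset_span (Set.mem_singleton _))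
  rw [mem_suppIdeal_iff] at hx
  obtain ⟨h1, h2⟩ := hx x x (by rw [gen_apply_self le_rfl]; exact one_ne_zero)
  exact le_antisymm h1 h2

lemma part4 (x y : C) : x ≤ y ↔
    idealProd (TwoSidedIdeal.span {gen x x}) (TwoSidedIdeal.span {gen y y}) ≠ ⊥ := by
  constructor
  · intro hxy hbot
    have hmem : gen x y ∈ idealProd (TwoSidedIdeal.span {gen x x})
        (TwoSidedIdeal.span {gen y y}) := by
      apply subset_span
      refine ⟨gen x x, subset_span (Set.mem_singleton _), gen x y, ?_, ?_⟩
      · rw [← gen_mul_gen hxy (le_refl y)]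
        exact TwoSidedIdeal.mul_mem_left _ _ _ (subset_span (Set.mem_singleton _))
      · rw [gen_mul_gen (le_refl x) hxy]
    rw [hbot, TwoSidedIdeal.mem_bot] at hmem
    exact gen_ne_zero hxy hmem
  · intro h
    by_contra hxy
    refine h (le_antisymm ?_ bot_le)
    refine span_le' ?_
    rintro z ⟨a, ha, b, hb, rfl⟩
    rw [SetLike.mem_coe, TwoSidedIdeal.mem_bot]
    have ha' := span_gen_le_suppIdeal x x ha
    have hb' := span_gen_le_suppIdeal y y hb
    rw [mem_suppIdeal_iff] at ha' hb'
    ext p q hpq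
    rw [IncidenceAlgebra.mul_apply, IncidenceAlgebra.zero_apply]
    refine Finset.sum_eq_zero ?_
    intro c _
    by_cases h1 : a p c = 0
    · rw [h1, zero_mul]
    · by_cases h2 : b c q = 0
      · rw [h2, mul_zero]
      · exact absurd ((ha' p c h1).2.trans (hb' c q h2).1) hxy

end

/-- The map `x ↦ A[xx]A` is a bijection from `C` onto the maximal indecomposable
two-sided ideals of the incidence algebra, and `x ≤ y` iff the product of the
corresponding ideals is nonzero. -/
theorem poset_recovered_from_incidence_algebra {C : Type*} [Fintype C] [PartialOrder C] [DecidableEq C] [LocallyFiniteOrder C] :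
    Function.Injective (fun x : C => TwoSidedIdeal.span {gen x x}) ∧
    (∀ x : C, IsMaximalIndecomposable (TwoSidedIdeal.span {gen x x})) ∧
    (∀ I : TwoSidedIdeal (IncidenceAlgebra ℂ C),
      IsMaximalIndecomposable I → ∃ x : C, I = TwoSidedIdeal.span {gen x x}) ∧
    (∀ x y : C, x ≤ y ↔
      idealProd (TwoSidedIdeal.span {gen x x}) (TwoSidedIdeal.span {gen y y}) ≠ ⊥) :=
  ⟨part1, span_gen_max, fun _ hI => part3 hI, part4⟩
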